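/- arXiv:1402.5513 — 2 statements merged into one kernel-verified Lean document; each statement's English description precedes it below -/
import Mathlib

section
/- For every event E, the intervals conv[Q̲(E), Q̄(E)] and [P̲(E), P̄(E)] overlap; equivalently, P̲(E) ≤ Q̄(E) and Q̲(E) ≤ P̄(E). -/
open Filter Finset

/-- Capital process in the coin-tossing game with initial capital `a`. -/
def cap (a : ℝ) (p M x : ℕ → ℝ) : ℕ → ℝ
  | 0 => a
  | n + 1 => cap a p M x n + M n * (x n - p n)

/-- Forecaster's moves are probabilities in `[0,1]`. -/
def ValidP (p : ℕ → ℝ) : Prop := ∀ n, p n ∈ Set.Icc (0 : ℝ) 1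

/-- Reality's moves are in `{0,1}`. -/
def ValidX (x : ℕ → ℝ) : Prop := ∀ n, x n = 0 ∨ x n = 1

/-- A Skeptic strategy reads Forecaster's moves up to round `n` and Reality's
moves before round `n`. -/
def SAdapted (S : (ℕ → ℝ) → (ℕ → ℝ) → ℕ → ℝ) : Prop :=
  ∀ p p' x x' : ℕ → ℝ, ∀ n, (∀ k ≤ n, p k = p' k) → (∀ k < n, x k = x' k) →
    S p x n = S p' x' n

/-- A Reality strategy reads Forecaster's and Skeptic's moves up to round `n`. -/
def RAdapted (R : (ℕ → ℝ) → (ℕ → ℝ) → ℕ → ℝ) : Prop :=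
  ∀ p p' M M' : ℕ → ℝ, ∀ n, (∀ k ≤ n, p k = p' k) → (∀ k ≤ n, M k = M' k) →
    R p M n = R p' M' n

/-- Upper probability of an event `E` (a set of paths `(p, x)`). -/
noncomputable def UpperP (E : (ℕ → ℝ) → (ℕ → ℝ) → Prop) : ℝ :=
  sInf {a | ∃ S, SAdapted S ∧ ∀ p x, ValidP p → ValidX x →
    (∀ n, 0 ≤ cap a p (S p x) x n) ∧
    (E p x → ∀ ε : ℝ, 0 < ε → ∃ n, 1 - ε < cap a p (S p x) x n)}

/-- Lower probability. -/
noncomputable def LowerP (E : (ℕ → ℝ) → (ℕ → ℝ) → Prop) : ℝ :=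
  1 - UpperP (fun p x => ¬ E p x)

/-- The set of initial capitals `a` for which some Reality strategy guarantees
the event and keeps the capital at most 1, against every Forecaster and every
Skeptic keeping the capital nonnegative. -/
def QSet (E : (ℕ → ℝ) → (ℕ → ℝ) → Prop) : Set ℝ :=
  {a | ∃ R, RAdapted R ∧ ∀ p M : ℕ → ℝ, ValidP p →
    ValidX (R p M) ∧
    ((∀ n, 0 ≤ cap a p M (R p M) n) →
      (E p (R p M) ∧ ∀ n, cap a p M (R p M) n ≤ 1))}

noncomputable def UpperQ (E : (ℕ → ℝ) → (ℕ → ℝ) → Prop) : ℝ := sSup (QSet E)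

noncomputable def LowerQ (E : (ℕ → ℝ) → (ℕ → ℝ) → Prop) : ℝ :=
  1 - UpperQ (fun p x => ¬ E p x)

/-! Fix a Skeptic strategy `S` that, from initial capital `a`, keeps its capital nonnegative and
nearly reaches `1` on every path outside `G`. Reality can then play against Skeptic's live moves
`M` *and* `S` at once: choosing `x n = 0` when `M n + S n ≥ 0` and `x n = 1` otherwise makes the
sum of the two capitals nonincreasing. Starting the live Skeptic at `1 - a - δ`, as long as it
stays nonnegative the capital of `S` stays at most `1 - δ`, so the path lies in `G`, and its own
capital stays at most `1`. Hence `1 - P̄(¬G) ≤ Q̄(G)`, and both inequalities are instances. -/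

open Function

section CausalFix

variable {α : Type*} [Inhabited α]

/-- Agrees with `causalFix F` below `n`; the values from `n` on are irrelevant. -/
def causalPrefix (F : (ℕ → α) → ℕ → α) : ℕ → ℕ → α
  | 0 => fun _ => default
  | n + 1 => update (causalPrefix F n) n (F (causalPrefix F n) n)

/-- The solution of `x n = F x n` when `F x n` only reads `x` below `n`. -/
def causalFix (F : (ℕ → α) → ℕ → α) (n : ℕ) : α :=
  F (causalPrefix F n) n

lemma causalPrefix_apply_of_lt (F : (ℕ → α) → ℕ → α) {k n : ℕ} (hk : k < n) :
    causalPrefix F n k = causalFix F k := by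
  induction n with
  | zero => omega
  | succ n ih =>
    rcases (Nat.lt_succ_iff.mp hk).lt_or_eq with hlt | rfl
    · rw [causalPrefix, update_of_ne hlt.ne, ih hlt]
    · rw [causalPrefix, update_self, causalFix]

lemma causalFix_eq (F : (ℕ → α) → ℕ → α)
    (hF : ∀ x y n, (∀ k < n, x k = y k) → F x n = F y n) (n : ℕ) :
    causalFix F n = F (causalFix F) n :=
  hF _ _ n fun _ hk => causalPrefix_apply_of_lt F hk

lemma causalFix_congr {F G : (ℕ → α) → ℕ → α} {n : ℕ} (hFG : ∀ x, ∀ k ≤ n, F x k = G x k) :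
    causalFix F n = causalFix G n := by
  have hpre : ∀ m ≤ n, causalPrefix F m = causalPrefix G m := by
    intro m hm
    induction m with
    | zero => rfl
    | succ m ih => rw [causalPrefix, causalPrefix, ih (by omega), hFG _ m (by omega)]
  rw [causalFix, causalFix, hpre n le_rfl, hFG _ n le_rfl]

end CausalFix

lemma cap_add (a b : ℝ) (p M N x : ℕ → ℝ) (n : ℕ) :
    cap a p M x n + cap b p N x n = cap (a + b) p (M + N) x n := by
  induction n with
  | zero => rfl
  | succ n ih => simp only [cap, ← ih, Pi.add_apply]; ring

lemma cap_le_of_forall_mul_nonpos {a : ℝ} {p M x : ℕ → ℝ} (h : ∀ k, M k * (x k - p k) ≤ 0)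
    (n : ℕ) : cap a p M x n ≤ a := by
  induction n with
  | zero => exact le_rfl
  | succ n ih => rw [cap]; linarith [h n]

lemma cap_zero (a : ℝ) (p x : ℕ → ℝ) (n : ℕ) : cap a p 0 x n = a := by
  induction n with
  | zero => rfl
  | succ n ih => simp [cap, ih]

/-- The outcome on which a Skeptic betting `m` cannot gain, whatever the forecast. -/
noncomputable def adverseMove (m : ℝ) : ℝ := if 0 ≤ m then 0 else 1

lemma mul_adverseMove_sub_nonpos (m : ℝ) {q : ℝ} (hq : q ∈ Set.Icc (0 : ℝ) 1) :
    m * (adverseMove m - q) ≤ 0 := by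
  unfold adverseMove
  split_ifs with hm
  · nlinarith [hq.1]
  · nlinarith [hq.2]

lemma adverseMove_eq_zero_or_eq_one (m : ℝ) : adverseMove m = 0 ∨ adverseMove m = 1 := by
  unfold adverseMove
  split_ifs <;> simp

/-- Reality plays against the live Skeptic `M` and the strategy `S` combined. -/
noncomputable def adversary (S : (ℕ → ℝ) → (ℕ → ℝ) → ℕ → ℝ) (p M : ℕ → ℝ) : ℕ → ℝ :=
  causalFix fun x n => adverseMove (M n + S p x n)

lemma validX_adversary (S : (ℕ → ℝ) → (ℕ → ℝ) → ℕ → ℝ) (p M : ℕ → ℝ) :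
    ValidX (adversary S p M) := fun _ => adverseMove_eq_zero_or_eq_one _

lemma adversary_eq {S : (ℕ → ℝ) → (ℕ → ℝ) → ℕ → ℝ} (hS : SAdapted S) (p M : ℕ → ℝ) (n : ℕ) :
    adversary S p M n = adverseMove (M n + S p (adversary S p M) n) :=
  causalFix_eq _ (fun x y n hxy => by rw [hS p p x y n (fun _ _ => rfl) hxy]) n

lemma rAdapted_adversary {S : (ℕ → ℝ) → (ℕ → ℝ) → ℕ → ℝ} (hS : SAdapted S) :
    RAdapted (adversary S) := fun p p' M M' n hp hM =>
  causalFix_congr fun x k hk => by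
    rw [hM k hk, hS p p' x x k (fun j hj => hp j (hj.trans hk)) (fun _ _ => rfl)]

/-- The initial capitals from which Skeptic can force the event `E`; `UpperP E` is its infimum. -/
def SkepticSet (E : (ℕ → ℝ) → (ℕ → ℝ) → Prop) : Set ℝ :=
  {a | ∃ S, SAdapted S ∧ ∀ p x, ValidP p → ValidX x →
    (∀ n, 0 ≤ cap a p (S p x) x n) ∧
    (E p x → ∀ ε : ℝ, 0 < ε → ∃ n, 1 - ε < cap a p (S p x) x n)}

lemma one_mem_SkepticSet (E : (ℕ → ℝ) → (ℕ → ℝ) → Prop) : (1 : ℝ) ∈ SkepticSet E :=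
  ⟨fun _ _ => 0, fun _ _ _ _ _ _ _ => rfl, fun p x _ _ =>
    ⟨fun n => by rw [cap_zero]; norm_num,
     fun _ ε hε => ⟨0, by rw [cap_zero]; linarith⟩⟩⟩

lemma le_one_of_mem_QSet {G : (ℕ → ℝ) → (ℕ → ℝ) → Prop} {a : ℝ} (ha : a ∈ QSet G) : a ≤ 1 := by
  obtain ⟨R, -, hR⟩ := ha
  by_contra! h1
  have hcap := cap_zero a 0 (R 0 0)
  have h := ((hR 0 0 fun _ => ⟨le_rfl, zero_le_one⟩).2 fun n => by rw [hcap]; linarith).2 0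
  rw [hcap] at h
  linarith

lemma sub_sub_mem_QSet {F G : (ℕ → ℝ) → (ℕ → ℝ) → Prop} (hFG : ∀ p x, ¬ G p x → F p x)
    {a δ : ℝ} (ha : a ∈ SkepticSet F) (hδ : 0 < δ) : 1 - a - δ ∈ QSet G := by
  obtain ⟨S, hS, hwin⟩ := ha
  refine ⟨adversary S, rAdapted_adversary hS, fun p M hp => ⟨validX_adversary S p M, fun hM => ?_⟩⟩
  set x := adversary S p M
  obtain ⟨hSpos, hSforce⟩ := hwin p x hp (validX_adversary S p M)
  have htotal : ∀ n, cap (1 - a - δ) p M x n + cap a p (S p x) x n ≤ 1 - δ := fun n => by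
    rw [cap_add]
    refine (cap_le_of_forall_mul_nonpos (fun k => ?_) n).trans_eq (by ring)
    rw [show x k = _ from adversary_eq hS p M k]
    exact mul_adverseMove_sub_nonpos _ (hp k)
  refine ⟨by_contra fun hG => ?_, fun n => by linarith [htotal n, hSpos n]⟩
  obtain ⟨n, hn⟩ := hSforce (hFG p x hG) δ hδ
  linarith [htotal n, hM n]

lemma one_sub_upperP_le_upperQ {F G : (ℕ → ℝ) → (ℕ → ℝ) → Prop}
    (hFG : ∀ p x, ¬ G p x → F p x) : 1 - UpperP F ≤ UpperQ G := by
  have hbdd : BddAbove (QSet G) := ⟨1, fun _ => le_one_of_mem_QSet⟩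
  suffices 1 - UpperQ G ≤ sInf (SkepticSet F) by rw [UpperP]; exact sub_le_comm.mp this
  refine le_csInf ⟨1, one_mem_SkepticSet F⟩ fun a ha => ?_
  suffices 1 - a ≤ UpperQ G by linarith
  refine le_of_forall_pos_le_add fun δ hδ => ?_
  have h : 1 - a - δ ≤ UpperQ G := le_csSup hbdd (sub_sub_mem_QSet hFG ha hδ)
  linarith

/-- For every event `E`, the intervals `conv[Q̲(E), Q̄(E)]` and
`[P̲(E), P̄(E)]` overlap: `P̲(E) ≤ Q̄(E)` and `Q̲(E) ≤ P̄(E)`. -/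
theorem stmt_13 (E : (ℕ → ℝ) → (ℕ → ℝ) → Prop) :
    LowerP E ≤ UpperQ E ∧ LowerQ E ≤ UpperP E :=
  ⟨one_sub_upperP_le_upperQ fun _ _ h => h,
    sub_le_comm.mp (one_sub_upperP_le_upperQ fun _ _ h => not_not.mp h)⟩
end

section
/- In the unbounded forecasting game, if Reality restricts her moves to x_n ∈ {0, n, -n} when v_n < n² and to x_n ∈ {√v_n, -√v_n} when v_n ≥ n², and announces x_n ≠ 0 if and only if c_n ≠ c_{n-1} (where c_n is the natural number with c_n - 1 ≤ ∑_{k=1}^n v_k/k² < c_n), then along the resulting path: ∑_n v_n/n² < ∞ if and only if x_n = 0 for all but finitely many n, if and only if (1/n)∑_{i=1}^n x_i → 0. -/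
/-!
Writing `S n` for the partial sums of `v k / k²`, the counter satisfies `c n - 1 = ⌊S n⌋`, so it is
nondecreasing and bounded exactly when the series converges; a bounded nondecreasing sequence of
naturals is eventually constant, and Reality moves nonzero exactly when `c` increments. Every
nonzero move has `|x n| ≥ n`, whereas Cesàro means tending to `0` force `x n / n → 0`.
-/

open Filter Finset

theorem summable_iff_exists_sum_range_succ_le {f : ℕ → ℝ} (hf : ∀ n, 0 ≤ f n) :
    Summable f ↔ ∃ C, ∀ n, ∑ i ∈ range (n + 1), f i ≤ C := by
  refine ⟨fun h ↦ ⟨∑' i, f i, fun n ↦ h.sum_le_tsum _ fun i _ ↦ hf i⟩, fun ⟨C, hC⟩ ↦ ?_⟩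
  refine summable_of_sum_range_le (c := C) hf fun n ↦ ?_
  calc ∑ i ∈ range n, f i ≤ ∑ i ∈ range (n + 1), f i := by
        rw [sum_range_succ]; exact le_add_of_nonneg_right (hf n)
    _ ≤ C := hC n

theorem Monotone.exists_forall_le_iff_eventually_succ_eq {c : ℕ → ℕ} (hc : Monotone c) :
    (∃ C, ∀ n, c n ≤ C) ↔ ∀ᶠ n in atTop, c (n + 1) = c n := by
  constructor
  · rintro ⟨C, hC⟩
    have hlim := tendsto_atTop_ciSup hc ⟨C, Set.forall_mem_range.2 hC⟩
    rw [nhds_discrete, tendsto_pure] at hlim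
    filter_upwards [hlim, (tendsto_add_atTop_nat 1).eventually hlim] with n h h1
    rw [h, h1]
  · intro h
    obtain ⟨N, hN⟩ := eventually_atTop.1 h
    refine ⟨c N, fun n ↦ (le_total n N).elim (fun hn ↦ hc hn) fun hn ↦ ?_⟩
    induction n, hn using Nat.le_induction with
    | base => rfl
    | succ m hm ih => rw [hN m hm]; exact ih

theorem eventually_atTop_succ_iff {p : ℕ → Prop} :
    (∀ᶠ n in atTop, p (n + 1)) ↔ ∀ᶠ n in atTop, p n := by
  conv_rhs => rw [← map_add_atTop_eq_nat 1]
  rfl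

theorem floor_eq_natCast_sub_one {s : ℝ} {m : ℕ} (h₁ : (m : ℝ) - 1 ≤ s) (h₂ : s < m) :
    ⌊s⌋ = (m : ℤ) - 1 := by
  rw [Int.floor_eq_iff]; push_cast; exact ⟨h₁, by linarith⟩

section

variable {S : ℕ → ℝ} {c : ℕ → ℕ}

theorem Monotone.of_sub_one_le_of_lt (hS : Monotone S)
    (hc : ∀ n, (c n : ℝ) - 1 ≤ S n ∧ S n < c n) : Monotone c := fun a b hab ↦ by
  have := Int.floor_mono (hS hab)
  rw [floor_eq_natCast_sub_one (hc a).1 (hc a).2, floor_eq_natCast_sub_one (hc b).1 (hc b).2]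
    at this
  omega

theorem exists_forall_le_iff_of_sub_one_le_of_lt (hc : ∀ n, (c n : ℝ) - 1 ≤ S n ∧ S n < c n) :
    (∃ C : ℝ, ∀ n, S n ≤ C) ↔ ∃ C : ℕ, ∀ n, c n ≤ C := by
  constructor
  · rintro ⟨C, hC⟩
    refine ⟨⌈C + 1⌉₊, fun n ↦ ?_⟩
    have : (c n : ℝ) ≤ ⌈C + 1⌉₊ := by linarith [(hc n).1, hC n, Nat.le_ceil (C + 1)]
    exact_mod_cast this
  · rintro ⟨C, hC⟩
    exact ⟨C, fun n ↦ (hc n).2.le.trans (by exact_mod_cast hC n)⟩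

end

theorem eq_zero_or_le_abs {a v x : ℝ} (ha : 0 ≤ a) (hsmall : v < a ^ 2 → x = a ∨ x = -a ∨ x = 0)
    (hbig : a ^ 2 ≤ v → x = √v ∨ x = -√v) : x = 0 ∨ a ≤ |x| := by
  rcases lt_or_ge v (a ^ 2) with h | h
  · rcases hsmall h with rfl | rfl | rfl <;> simp [abs_of_nonneg ha]
  · have : a ≤ √v := Real.le_sqrt_of_sq_le h
    rcases hbig h with rfl | rfl <;> simp [abs_of_nonneg (Real.sqrt_nonneg v), this]

section

variable {x : ℕ → ℝ}

theorem tendsto_sum_range_div_of_eventually_eq_zero (hx : ∀ᶠ n in atTop, x n = 0) :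
    Tendsto (fun n ↦ (∑ i ∈ range n, x i) / n) atTop (nhds 0) := by
  obtain ⟨N, hN⟩ := eventually_atTop.1 hx
  refine (tendsto_const_div_atTop_nhds_zero_nat (∑ i ∈ range N, x i)).congr' ?_
  filter_upwards [eventually_ge_atTop N] with n hn
  congr 1
  induction n, hn using Nat.le_induction with
  | base => rfl
  | succ m hm ih => rw [ih, sum_range_succ, hN m hm, add_zero]

-- `x n / (n + 1) = A (n + 1) - n / (n + 1) * A n` for the Cesàro means `A`.
theorem tendsto_div_succ_of_tendsto_sum_range_div
    (hx : Tendsto (fun n ↦ (∑ i ∈ range n, x i) / n) atTop (nhds 0)) :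
    Tendsto (fun n : ℕ ↦ x n / (n + 1)) atTop (nhds 0) := by
  have hlim := ((tendsto_add_atTop_iff_nat 1).2 hx).sub
    ((tendsto_natCast_div_add_atTop (1 : ℝ)).mul hx)
  rw [mul_zero, sub_zero] at hlim
  refine hlim.congr fun n ↦ ?_
  rcases n.eq_zero_or_pos with rfl | hn
  · simp
  · have : (n : ℝ) ≠ 0 := by positivity
    push_cast; rw [sum_range_succ]; field_simp; ring

theorem eventually_eq_zero_iff_tendsto_sum_range_div (hx : ∀ n, x n = 0 ∨ (n : ℝ) + 1 ≤ |x n|) :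
    (∀ᶠ n in atTop, x n = 0) ↔ Tendsto (fun n ↦ (∑ i ∈ range n, x i) / n) atTop (nhds 0) := by
  refine ⟨tendsto_sum_range_div_of_eventually_eq_zero, fun h ↦ ?_⟩
  have hsmall := (tendsto_div_succ_of_tendsto_sum_range_div h).abs
  rw [abs_zero] at hsmall
  filter_upwards [hsmall.eventually (gt_mem_nhds one_pos)] with n hn
  refine (hx n).resolve_right fun hle ↦ hn.not_ge ?_
  rw [abs_div, abs_of_pos (by positivity : (0 : ℝ) < n + 1), le_div_iff₀ (by positivity)]
  linarith

end

theorem stmt_19_general (v x : ℕ → ℝ) (c : ℕ → ℕ)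
    (hv : ∀ n, 0 < v n)
    (hc : ∀ n, (c n : ℝ) - 1 ≤ ∑ k ∈ Finset.range (n + 1), v k / ((k : ℝ) + 1) ^ 2 ∧
      ∑ k ∈ Finset.range (n + 1), v k / ((k : ℝ) + 1) ^ 2 < (c n : ℝ))
    (hsmall : ∀ n : ℕ, v n < ((n : ℝ) + 1) ^ 2 →
      x n = (n : ℝ) + 1 ∨ x n = -((n : ℝ) + 1) ∨ x n = 0)
    (hbig : ∀ n : ℕ, ((n : ℝ) + 1) ^ 2 ≤ v n →
      x n = Real.sqrt (v n) ∨ x n = -Real.sqrt (v n))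
    (hzero : ∀ n, x (n + 1) ≠ 0 ↔ c (n + 1) ≠ c n) :
    (Summable (fun n => v n / ((n : ℝ) + 1) ^ 2) ↔
      (∀ᶠ n in atTop, x n = 0)) ∧
    ((∀ᶠ n in atTop, x n = 0) ↔
      Tendsto (fun n => (∑ i ∈ Finset.range n, x i) / (n : ℝ))
        atTop (nhds 0)) := by
  have hterm : ∀ k, 0 ≤ v k / ((k : ℝ) + 1) ^ 2 := fun k ↦ (div_pos (hv k) (by positivity)).le
  have hS : Monotone fun n ↦ ∑ k ∈ range (n + 1), v k / ((k : ℝ) + 1) ^ 2 :=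
    monotone_nat_of_le_succ fun n ↦ by
      rw [sum_range_succ _ (n + 1)]; exact le_add_of_nonneg_right (hterm _)
  refine ⟨?_, eventually_eq_zero_iff_tendsto_sum_range_div fun n ↦
    eq_zero_or_le_abs (by positivity) (hsmall n) (hbig n)⟩
  rw [summable_iff_exists_sum_range_succ_le hterm, exists_forall_le_iff_of_sub_one_le_of_lt hc,
    (hS.of_sub_one_le_of_lt hc).exists_forall_le_iff_eventually_succ_eq,
    ← eventually_atTop_succ_iff (p := fun n ↦ x n = 0)]
  simp only [← not_ne_iff, hzero]

/-- In the unbounded forecasting game with `m n = 0` and `v n > 0`, suppose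
Reality restricts her moves to `{0, n, -n}` when `v n < n²` and to `{±√v n}`
when `v n ≥ n²` (here round `n+1` corresponds to index `n`), and announces a
nonzero move exactly when `c` increments, where `c n` is the natural number
with `c n - 1 ≤ ∑_{k ≤ n} v k / k² < c n`.  Then along the resulting path:
`∑ v n / n² < ∞` iff `x n = 0` for all but finitely many `n`, iff
`(1/n) ∑_{i ≤ n} x i → 0`. -/
theorem stmt_19 (v x : ℕ → ℝ) (c : ℕ → ℕ)
    (hv : ∀ n, 0 < v n)
    (hc : ∀ n, (c n : ℝ) - 1 ≤ ∑ k ∈ Finset.range (n + 1), v k / ((k : ℝ) + 1) ^ 2 ∧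
      ∑ k ∈ Finset.range (n + 1), v k / ((k : ℝ) + 1) ^ 2 < (c n : ℝ))
    (hsmall : ∀ n : ℕ, v n < ((n : ℝ) + 1) ^ 2 →
      x n = (n : ℝ) + 1 ∨ x n = -((n : ℝ) + 1) ∨ x n = 0)
    (hbig : ∀ n : ℕ, ((n : ℝ) + 1) ^ 2 ≤ v n →
      x n = Real.sqrt (v n) ∨ x n = -Real.sqrt (v n))
    (hzero0 : x 0 ≠ 0 ↔ c 0 ≠ 1)
    (hzero : ∀ n, x (n + 1) ≠ 0 ↔ c (n + 1) ≠ c n) :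
    (Summable (fun n => v n / ((n : ℝ) + 1) ^ 2) ↔
      (∀ᶠ n in atTop, x n = 0)) ∧
    ((∀ᶠ n in atTop, x n = 0) ↔
      Tendsto (fun n => (∑ i ∈ Finset.range n, x i) / (n : ℝ))
        atTop (nhds 0)) :=
  stmt_19_general v x c hv hc hsmall hbig hzero
end
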